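/- For a partition μ = (μ_1, …, μ_l) of n with l = l(μ) nonzero parts, Σ_{i≥0} Σ_{j≥0} b_{ij}(μ;q) = (1−q^{-1})^l · ∏_{i=1}^{l} ( 3μ_i − 3q^{-1}(μ_i−1) + (μ_i−1)(μ_i−2)(1−q^{-1})^2/2 ). -/

import Mathlib

/-!
Summing `b_{ij}` over all `i, j` forgets the constraints `|τ| = i`, `|θ| = j`, leaving a sum over
all `τ ≤ μ`, `θ ≤ μ - τ` of `x ^ (l(τ) + l(θ) + l(μ - τ - θ))` with `x = 1 - q⁻¹`. The summand is a
product over the coordinates, so the sum factors as a product over `i` of a sum over the ways of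
writing `μ_i = a + b + c`, each weighted by `x` to the number of nonzero parts. For `μ_i = n + 1`
there are `3`, `3n` and `C(n, 2)` such triples with one, two and three nonzero parts.
-/

open Finset

noncomputable section

abbrev FF : Type := RatFunc ℚ

/-- The ring Λ of symmetric functions over ℚ(t), as the polynomial ring in the
algebraically independent power sums `pp 1, pp 2, …`. -/
abbrev SymF : Type := MvPolynomial ℕ+ FF

/-- The variable t of the ground field ℚ(t). -/
def tv : FF := RatFunc.X

/-- the power sum p_n -/
def pp (n : ℕ+) : SymF := MvPolynomial.X n

/-- q_n(a), defined by Σ_{n≥0} q_n(a) z^n = exp(Σ_{n≥1} ((1-a^n)/n) p_n z^n);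
equivalently (taking the logarithmic derivative of the generating function)
by q_0 = 1 and n·q_n = Σ_{k=1}^{n} (1-a^k) p_k q_{n-k}. -/
def qn (a : FF) : ℕ → SymF
  | 0 => 1
  | n + 1 =>
      (((n : FF) + 1)⁻¹) • ∑ k ∈ Finset.range (n + 1),
        (MvPolynomial.C (1 - a ^ (k + 1))) * pp ⟨k + 1, Nat.succ_pos k⟩ * qn a (n - k)
  termination_by n => n
  decreasing_by omega

/-- q̂_n(a), defined by Σ_{n≥0} q̂_n(a) z^n = exp(Σ_{n≥1} ((1-a^n)/n)(1+p_n) z^n);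
equivalently by q̂_0 = 1 and n·q̂_n = Σ_{k=1}^{n} (1-a^k)(1+p_k) q̂_{n-k}. -/
def qhat (a : FF) : ℕ → SymF
  | 0 => 1
  | n + 1 =>
      (((n : FF) + 1)⁻¹) • ∑ k ∈ Finset.range (n + 1),
        (MvPolynomial.C (1 - a ^ (k + 1))) * (1 + pp ⟨k + 1, Nat.succ_pos k⟩) * qhat a (n - k)
  termination_by n => n
  decreasing_by omega

/-- the number of nonzero parts of a composition -/
def ell {l : ℕ} (mu : Fin l → ℕ) : ℕ := (Finset.univ.filter fun i => mu i ≠ 0).card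

/-- q̂_μ(a) = ∏_i q̂_{μ_i}(a). -/
def qhatProd (a : FF) {l : ℕ} (mu : Fin l → ℕ) : SymF := ∏ i, qhat a (mu i)

/-- q_μ(a) = ∏_i q_{μ_i}(a). -/
def qnProd (a : FF) {l : ℕ} (mu : Fin l → ℕ) : SymF := ∏ i, qn a (mu i)

/-- C(μ;k): compositions τ ⊂ μ with |τ| = k. -/
def Cset {l : ℕ} (mu : Fin l → ℕ) (k : ℕ) : Finset (Fin l → ℕ) :=
  (Finset.Iic mu).filter fun τ => ∑ i, τ i = k

/-- a_{ij}(μ;t) = Σ_{τ ∈ C(μ;i)} Σ_{θ ∈ C(μ-τ;j)} (1-t⁻¹)^{l(τ)+l(θ)} (1-t)^{l(μ-τ-θ)}.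
(This expression automatically vanishes when i + j > |μ|, since then the index set
of the inner sum is empty.) -/
def aco {l : ℕ} (t : FF) (mu : Fin l → ℕ) (i j : ℕ) : FF :=
  ∑ τ ∈ Cset mu i, ∑ θ ∈ Cset (mu - τ) j,
    (1 - t⁻¹) ^ (ell τ + ell θ) * (1 - t) ^ ell (mu - τ - θ)

/-- b_{ij}(μ;t) = Σ_{τ ∈ C(μ;i)} Σ_{θ ∈ C(μ-τ;j)} (1-t⁻¹)^{l(τ)+l(θ)+l(μ-τ-θ)}.
(This expression automatically vanishes when i + j > |μ|.) -/
def bco {l : ℕ} (t : FF) (mu : Fin l → ℕ) (i j : ℕ) : FF :=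
  ∑ τ ∈ Cset mu i, ∑ θ ∈ Cset (mu - τ) j,
    (1 - t⁻¹) ^ (ell τ + ell θ + ell (mu - τ - θ))

section Cset

variable {l : ℕ} {M : Type*} [AddCommMonoid M]

lemma sum_mem_range_of_mem_Iic {τ mu : Fin l → ℕ} (h : τ ∈ Iic mu) :
    ∑ i, τ i ∈ range (∑ i, mu i + 1) :=
  mem_range.2 (Nat.lt_succ_of_le (sum_le_sum fun i _ => (mem_Iic.1 h : τ ≤ mu) i))

lemma support_sum_Cset_subset (mu : Fin l → ℕ) (f : (Fin l → ℕ) → M) :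
    Function.support (fun k => ∑ τ ∈ Cset mu k, f τ) ⊆ range (∑ i, mu i + 1) := by
  intro k hk
  obtain ⟨τ, hτ, -⟩ := exists_ne_zero_of_sum_ne_zero hk
  obtain ⟨hτmu, rfl⟩ := mem_filter.1 hτ
  exact sum_mem_range_of_mem_Iic hτmu

lemma finsum_sum_Cset (mu : Fin l → ℕ) (f : (Fin l → ℕ) → M) :
    ∑ᶠ k, ∑ τ ∈ Cset mu k, f τ = ∑ τ ∈ Iic mu, f τ := by
  rw [finsum_eq_sum_of_support_subset _ (support_sum_Cset_subset mu f)]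
  exact sum_fiberwise_of_maps_to (fun τ => sum_mem_range_of_mem_Iic) f

lemma finsum_finsum_sum_Cset_sum_Cset (mu : Fin l → ℕ) (f : (Fin l → ℕ) → (Fin l → ℕ) → M) :
    ∑ᶠ i, ∑ᶠ j, ∑ τ ∈ Cset mu i, ∑ θ ∈ Cset (mu - τ) j, f τ θ =
      ∑ τ ∈ Iic mu, ∑ θ ∈ Iic (mu - τ), f τ θ := by
  calc _ = ∑ᶠ i, ∑ τ ∈ Cset mu i, ∑ θ ∈ Iic (mu - τ), f τ θ := by
          refine finsum_congr fun i => ?_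
          rw [finsum_sum_comm _ _ fun τ _ =>
            (finite_toSet _).subset (support_sum_Cset_subset (mu - τ) (f τ))]
          simp only [finsum_sum_Cset]
    _ = _ := finsum_sum_Cset mu _

end Cset

def nonzeroWeight {R : Type*} [One R] (x : R) (a : ℕ) : R := if a = 0 then 1 else x

@[simp] lemma nonzeroWeight_zero {R : Type*} [One R] (x : R) : nonzeroWeight x 0 = 1 := rfl

@[simp] lemma nonzeroWeight_succ {R : Type*} [One R] (x : R) (a : ℕ) :
    nonzeroWeight x (a + 1) = x := rfl

lemma pow_ell {R : Type*} [CommMonoid R] {l : ℕ} (x : R) (nu : Fin l → ℕ) :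
    x ^ ell nu = ∏ i, nonzeroWeight x (nu i) := by
  simp only [nonzeroWeight, prod_ite, prod_const_one, one_mul, prod_const, ell]

lemma sum_Iic_sum_Iic_sub_prod {ι R : Type*} [Fintype ι] [DecidableEq ι] [CommSemiring R]
    (mu : ι → ℕ) (g : ι → ℕ → ℕ → R) :
    ∑ τ ∈ Iic mu, ∑ θ ∈ Iic (mu - τ), ∏ i, g i (τ i) (θ i) =
      ∏ i, ∑ a ∈ Iic (mu i), ∑ b ∈ Iic (mu i - a), g i a b := by
  have hpi (nu : ι → ℕ) : Iic nu = Fintype.piFinset fun i => Iic (nu i) := rfl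
  simp_rw [prod_univ_sum, hpi, Pi.sub_apply]

lemma sum_antidiagonal_snd {M : Type*} [AddCommMonoid M] (g : ℕ → M) (n : ℕ) :
    ∑ p ∈ antidiagonal n, g p.2 = ∑ k ∈ range (n + 1), g k := by
  rw [← Nat.sum_antidiagonal_swap]
  exact Nat.sum_antidiagonal_eq_sum_range_succ (fun a _ => g a) n

section Coordinate

variable {R : Type*} [CommSemiring R] (x : R)

lemma sum_range_nonzeroWeight (n : ℕ) :
    ∑ k ∈ range (n + 1), nonzeroWeight x k = 1 + n * x := by
  simp [sum_range_succ', add_comm]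

lemma sum_antidiagonal_nonzeroWeight_mul (n : ℕ) :
    ∑ p ∈ antidiagonal (n + 1), nonzeroWeight x p.1 * nonzeroWeight x p.2 =
      2 * x + n * x ^ 2 := by
  rw [Nat.sum_antidiagonal_succ]
  simp only [nonzeroWeight_zero, nonzeroWeight_succ, ← mul_sum,
    sum_antidiagonal_snd (nonzeroWeight x), sum_range_nonzeroWeight]
  ring

lemma sum_range_sum_antidiagonal_nonzeroWeight_mul (n : ℕ) :
    ∑ k ∈ range (n + 1), ∑ p ∈ antidiagonal k, nonzeroWeight x p.1 * nonzeroWeight x p.2 =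
      1 + 2 * n * x + n.choose 2 * x ^ 2 := by
  induction n with
  | zero => simp
  | succ n ih =>
    rw [sum_range_succ, ih, sum_antidiagonal_nonzeroWeight_mul, Nat.choose_succ_succ',
      Nat.choose_one_right]
    push_cast
    ring

lemma sum_antidiagonal_nonzeroWeight_mul_sum_antidiagonal (n : ℕ) :
    ∑ p ∈ antidiagonal (n + 1), nonzeroWeight x p.1 *
        ∑ q ∈ antidiagonal p.2, nonzeroWeight x q.1 * nonzeroWeight x q.2 =
      3 * x + 3 * n * x ^ 2 + n.choose 2 * x ^ 3 := by
  rw [Nat.sum_antidiagonal_succ]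
  simp only [nonzeroWeight_zero, nonzeroWeight_succ, one_mul, ← mul_sum,
    sum_antidiagonal_snd (fun k => ∑ q ∈ antidiagonal k, nonzeroWeight x q.1 * nonzeroWeight x q.2),
    sum_antidiagonal_nonzeroWeight_mul, sum_range_sum_antidiagonal_nonzeroWeight_mul]
  ring

lemma sum_Iic_sum_Iic_sub_nonzeroWeight (n : ℕ) :
    ∑ a ∈ Iic (n + 1), ∑ b ∈ Iic (n + 1 - a),
        nonzeroWeight x a * nonzeroWeight x b * nonzeroWeight x (n + 1 - a - b) =
      3 * x + 3 * n * x ^ 2 + n.choose 2 * x ^ 3 := by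
  rw [← sum_antidiagonal_nonzeroWeight_mul_sum_antidiagonal, Nat.sum_antidiagonal_eq_sum_range_succ
    (fun a b => nonzeroWeight x a * ∑ q ∈ antidiagonal b, nonzeroWeight x q.1 * nonzeroWeight x q.2)]
  simp only [Nat.sum_antidiagonal_eq_sum_range_succ (fun a b => nonzeroWeight x a * nonzeroWeight x b),
    Nat.range_succ_eq_Iic, mul_sum, mul_assoc, Nat.sub_sub]

end Coordinate

theorem bco_sum_general (l : ℕ) (mu : Fin l → ℕ) (hmu_pos : ∀ i, 0 < mu i) :
    ∑ᶠ i : ℕ, ∑ᶠ j : ℕ, bco tv mu i j =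
      (1 - tv⁻¹) ^ l *
        ∏ i : Fin l,
          (3 * (mu i : FF) - 3 * tv⁻¹ * ((mu i : FF) - 1) +
            ((mu i : FF) - 1) * ((mu i : FF) - 2) * (1 - tv⁻¹) ^ 2 / 2) := by
  have hweight (x : FF) (τ θ : Fin l → ℕ) : x ^ (ell τ + ell θ + ell (mu - τ - θ)) =
      ∏ i, nonzeroWeight x (τ i) * nonzeroWeight x (θ i) * nonzeroWeight x (mu i - τ i - θ i) := by
    simp only [pow_add, pow_ell, prod_mul_distrib, Pi.sub_apply]
  simp only [bco, finsum_finsum_sum_Cset_sum_Cset, hweight]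
  rw [sum_Iic_sum_Iic_sub_prod mu fun i a b => nonzeroWeight (1 - tv⁻¹) a *
    nonzeroWeight (1 - tv⁻¹) b * nonzeroWeight (1 - tv⁻¹) (mu i - a - b), ← Fin.prod_const,
    ← prod_mul_distrib]
  refine prod_congr rfl fun i _ => ?_
  obtain ⟨k, hk⟩ := Nat.exists_eq_add_of_lt (hmu_pos i)
  rw [hk, zero_add, sum_Iic_sum_Iic_sub_nonzeroWeight, Nat.cast_choose_two]
  push_cast
  ring

/-- Corollary 3.9, identity (3.22):
Σ_{i,j≥0} b_{ij}(μ;q)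
  = (1-q⁻¹)^l ∏_{i=1}^{l} (3μ_i - 3q⁻¹(μ_i-1) + (μ_i-1)(μ_i-2)(1-q⁻¹)²/2). -/
theorem bco_sum (l n : ℕ) (mu : Fin l → ℕ)
    (hmu_anti : ∀ i j : Fin l, i ≤ j → mu j ≤ mu i) (hmu_pos : ∀ i, 0 < mu i)
    (hmu_sum : ∑ i, mu i = n) :
    ∑ᶠ i : ℕ, ∑ᶠ j : ℕ, bco tv mu i j =
      (1 - tv⁻¹) ^ l *
        ∏ i : Fin l,
          (3 * (mu i : FF) - 3 * tv⁻¹ * ((mu i : FF) - 1) +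
            ((mu i : FF) - 1) * ((mu i : FF) - 2) * (1 - tv⁻¹) ^ 2 / 2) :=
  bco_sum_general l mu hmu_pos

end
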